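/- arXiv:1009.2637 — 2 statements merged into one kernel-verified Lean document; each statement's English description precedes it below -/
import Mathlib

section
/- If p_a(0) = 0 for all landmarks a > 1 in the landmark Hamiltonian system, then p_1(t) is constant in time and q^1 moves in a straight line with constant velocity K(0) p_1, while each other landmark satisfies q̇^a(t) = K(q^a(t) - q^1(t)) p_1. -/
/-!
Regard the trajectories `q` as given. Then the momenta solve `ṗ = F (G t) p`, where
`G t a b = ∇K (qᵃ(t) - qᵇ(t))` is continuous in `t` and `F` is polynomial, hence locally
Lipschitz, so `p` is the unique solution with its initial value. Since `K` is even, `∇K 0 = 0`,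
so the initial momentum (a single nonzero entry) is a stationary point of `F (G t)` and `p` is
constant. The velocity sums then reduce to their term `b = 0`.
-/

open scoped RealInnerProductSpace

open Set

theorem Function.Even.fderiv_zero {𝕜 E F : Type*} [RCLike 𝕜] [NormedAddCommGroup E]
    [NormedSpace 𝕜 E] [NormedAddCommGroup F] [NormedSpace 𝕜 F] {f : E → F} (hf : f.Even) :
    fderiv 𝕜 f 0 = 0 := by
  by_cases hd : DifferentiableAt 𝕜 f 0
  · have hneg : HasFDerivAt f (-fderiv 𝕜 f 0) 0 := by
      have := (neg_zero (G := E) ▸ hd.hasFDerivAt).comp 0 (hasFDerivAt_id (0 : E)).neg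
      simpa [Function.comp_def, hf _] using this
    have h2 : (2 : 𝕜) • fderiv 𝕜 f 0 = 0 := by
      rw [two_smul]
      nth_rw 1 [← hneg.unique hd.hasFDerivAt]
      exact neg_add_cancel _
    exact (smul_eq_zero.1 h2).resolve_left two_ne_zero
  · exact fderiv_zero_of_not_differentiableAt hd

section Gradient

variable {F : Type*} [NormedAddCommGroup F] [InnerProductSpace ℝ F] [CompleteSpace F] {f : F → ℝ}

theorem Function.Even.gradient_zero (hf : f.Even) : gradient f 0 = 0 := by
  rw [gradient, hf.fderiv_zero, map_zero]

theorem ContDiff.continuous_gradient {n : WithTop ℕ∞} (hf : ContDiff ℝ n f) (hn : n ≠ 0) :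
    Continuous (gradient f) :=
  (InnerProductSpace.toDual ℝ F).symm.continuous.comp (hf.continuous_fderiv hn)

end Gradient

theorem eq_add_smul_of_forall_hasDerivAt {E : Type*} [NormedAddCommGroup E] [NormedSpace ℝ E]
    {f : ℝ → E} {v : E} (hf : ∀ t, HasDerivAt f v t) (t : ℝ) : f t = f 0 + t • v := by
  have hline : ∀ s, HasDerivAt (fun s => f s - s • v) 0 s := fun s =>
    ((hf s).sub ((hasDerivAt_id s).smul_const v)).congr_deriv (by simp)
  have := is_const_of_deriv_eq_zero (fun s => (hline s).differentiableAt)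
    (fun s => (hline s).deriv) t 0
  simpa [sub_eq_iff_eq_add, add_comm] using this

theorem ODE_solution_unique_of_locallyLipschitz {P E : Type*} [PseudoMetricSpace P]
    [NormedAddCommGroup E] [NormedSpace ℝ E] {F : P → E → E}
    (hF : LocallyLipschitz (Function.uncurry F)) {c : ℝ → P} (hc : Continuous c) {f g : ℝ → E}
    (hf : ∀ t, HasDerivAt f (F (c t) (f t)) t) (hg : ∀ t, HasDerivAt g (F (c t) (g t)) t)
    {t₀ : ℝ} (heq : f t₀ = g t₀) : f = g := by
  ext t
  obtain ⟨A, B, ht, ht₀⟩ : ∃ A B, t ∈ Ioo A B ∧ t₀ ∈ Ioo A B :=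
    ⟨min t t₀ - 1, max t t₀ + 1, by constructor <;> constructor <;> grind⟩
  -- On the compact set swept out by both trajectories the field is uniformly Lipschitz.
  set S := (fun s => (c s, f s)) '' Icc A B ∪ (fun s => (c s, g s)) '' Icc A B
  have hS : IsCompact S := by
    refine (isCompact_Icc.image ?_).union (isCompact_Icc.image ?_)
    · exact hc.prodMk (continuous_iff_continuousAt.2 fun s => (hf s).continuousAt)
    · exact hc.prodMk (continuous_iff_continuousAt.2 fun s => (hg s).continuousAt)
  obtain ⟨L, hL⟩ := hF.locallyLipschitzOn.exists_lipschitzOnWith_of_compact hS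
  have hLt : ∀ s, LipschitzOnWith L (F (c s)) ((c s, ·) ⁻¹' S) := fun s => by
    have h := hL.comp (LipschitzWith.prodMk_left (c s)).lipschitzOnWith (mapsTo_preimage _ _)
    rwa [mul_one] at h
  exact ODE_solution_unique_of_mem_Ioo (fun s _ => hLt s) ht₀
    (fun s hs => ⟨hf s, .inl ⟨s, Ioo_subset_Icc_self hs, rfl⟩⟩)
    (fun s hs => ⟨hg s, .inr ⟨s, Ioo_subset_Icc_self hs, rfl⟩⟩) heq ht

section MomentumField

variable {ι E : Type*} [Fintype ι] [NormedAddCommGroup E] [InnerProductSpace ℝ E]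

/-- Here `G a b` stands for `∇K (qᵃ - qᵇ)`. -/
def momentumField (G : ι → ι → E) (x : ι → E) : ι → E :=
  fun a => -∑ b, ⟪x a, x b⟫ • G a b

theorem contDiff_momentumField {n : WithTop ℕ∞} :
    ContDiff ℝ n (Function.uncurry (momentumField : (ι → ι → E) → (ι → E) → ι → E)) := by
  have hx (a : ι) : ContDiff ℝ n fun Gx : (ι → ι → E) × (ι → E) => Gx.2 a :=
    (contDiff_apply ℝ E a).comp contDiff_snd
  have hG (a b : ι) : ContDiff ℝ n fun Gx : (ι → ι → E) × (ι → E) => Gx.1 a b :=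
    (contDiff_apply_apply ℝ E a b).comp contDiff_fst
  exact contDiff_pi.2 fun a =>
    (ContDiff.sum fun b _ => ((hx a).inner ℝ (hx b)).smul (hG a b)).neg

theorem momentumField_eq_zero_of_forall_ne {G : ι → ι → E} {x : ι → E} {i : ι}
    (hx : ∀ a, a ≠ i → x a = 0) (hG : G i i = 0) : momentumField G x = 0 := by
  funext a
  rw [momentumField, Pi.zero_apply, neg_eq_zero]
  refine Finset.sum_eq_zero fun b _ => ?_
  by_cases ha : a = i
  · by_cases hb : b = i
    · rw [ha, hb, hG, smul_zero]
    · rw [hx b hb, inner_zero_right, zero_smul]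
  · rw [hx a ha, inner_zero_left, zero_smul]

end MomentumField

/-- If initially only the first landmark carries momentum, then its momentum
stays constant, it moves in a straight line with constant velocity `K(0) p₁`,
and every other landmark is dragged along with velocity `K(qᵃ-q¹) p₁`. -/
theorem landmark_one_momentum_dynamics {D N : ℕ}
    (K : EuclideanSpace ℝ (Fin D) → ℝ) (hK : ContDiff ℝ 2 K)
    (heven : ∀ x, K (-x) = K x)
    (q p : ℝ → Fin (N + 1) → EuclideanSpace ℝ (Fin D))
    (hq : ∀ t a, HasDerivAt (fun s => q s a) (∑ b, K (q t a - q t b) • p t b) t)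
    (hp : ∀ t a, HasDerivAt (fun s => p s a)
      (-∑ b, ⟪p t a, p t b⟫ • gradient K (q t a - q t b)) t)
    (h0 : ∀ a, a ≠ 0 → p 0 a = 0) :
    (∀ t, p t 0 = p 0 0) ∧
    (∀ t, q t 0 = q 0 0 + t • (K 0 • p 0 0)) ∧
    (∀ a, a ≠ 0 → ∀ t,
      HasDerivAt (fun s => q s a) (K (q t a - q t 0) • p t 0) t) := by
  set G : ℝ → Fin (N + 1) → Fin (N + 1) → EuclideanSpace ℝ (Fin D) :=
    fun t a b => gradient K (q t a - q t b)
  have hqc (a : Fin (N + 1)) : Continuous fun t => q t a :=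
    continuous_iff_continuousAt.2 fun t => (hq t a).continuousAt
  have hG : Continuous G := continuous_pi fun a => continuous_pi fun b =>
    (hK.continuous_gradient two_ne_zero).comp ((hqc a).sub (hqc b))
  have hG_diag (t : ℝ) : G t 0 0 = 0 := by
    simp only [G, sub_self]
    exact Function.Even.gradient_zero heven
  have hp_const : p = fun _ => p 0 :=
    ODE_solution_unique_of_locallyLipschitz contDiff_momentumField.locallyLipschitz hG
      (fun t => hasDerivAt_pi.2 (hp t))
      (fun t => momentumField_eq_zero_of_forall_ne h0 (hG_diag t) ▸ hasDerivAt_const t _) rfl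
  have hp_eq (t : ℝ) : p t = p 0 := congrFun hp_const t
  have hvel (t : ℝ) (a : Fin (N + 1)) :
      HasDerivAt (fun s => q s a) (K (q t a - q t 0) • p t 0) t := by
    have h := hq t a
    rwa [Finset.sum_eq_single 0 (fun b _ hb => by rw [hp_eq, h0 b hb, smul_zero])
      (by simp)] at h
  refine ⟨fun t => by rw [hp_eq], fun t => ?_, fun a _ t => hvel t a⟩
  refine eq_add_smul_of_forall_hasDerivAt (f := fun s => q s 0) (fun s => ?_) t
  simpa only [sub_self, hp_eq] using hvel s 0
end

section
/- The circular orbit q¹(t) = (r cos t, r sin t), q²(t) = -q¹(t) with momenta p₁ = (γ₀ - γ(2r))⁻¹ q̇¹, p₂ = -p₁ satisfies the two-landmark geodesic (Hamiltonian) equations if and only if r satisfies γ₀ - γ(2r) + r γ'(2r) = 0. -/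
/-!
With `c = γ₀ - γ(2r)` the momentum is `δp = c⁻¹ • δq̇`, and `‖δq‖ ≡ r`, so the first equation
holds for every radius. Along the circle `δṗ = -c⁻¹ • δq`, while the force term is
`r γ'(2r) / c² • δq`; as `δq` never vanishes the second equation is the scalar identity
`-c⁻¹ = r γ'(2r) / c²`, i.e. `c + r γ'(2r) = 0`.
-/

open Real

theorem HasDerivAt.euclideanVec2 {f g : ℝ → ℝ} {f' g' t : ℝ}
    (hf : HasDerivAt f f' t) (hg : HasDerivAt g g' t) :
    HasDerivAt (fun t => !₂[f t, g t]) !₂[f', g'] t :=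
  (EuclideanSpace.equiv (Fin 2) ℝ).symm.hasFDerivAt.comp_hasDerivAt t
    (hasDerivAt_pi.2 fun i => by fin_cases i <;> assumption)

theorem EuclideanSpace.norm_vec2 (a b : ℝ) : ‖!₂[a, b]‖ = √(a ^ 2 + b ^ 2) := by
  simp [EuclideanSpace.norm_eq, Fin.sum_univ_two]

noncomputable def circlePath (r t : ℝ) : EuclideanSpace ℝ (Fin 2) :=
  !₂[r * cos t, r * sin t]

noncomputable def circleVelocity (r t : ℝ) : EuclideanSpace ℝ (Fin 2) :=
  !₂[-(r * sin t), r * cos t]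

variable {r : ℝ}

theorem hasDerivAt_circlePath (t : ℝ) : HasDerivAt (circlePath r) (circleVelocity r t) t := by
  have hcos : HasDerivAt (fun t => r * cos t) (-(r * sin t)) t := by
    simpa using (hasDerivAt_cos t).const_mul r
  exact hcos.euclideanVec2 ((hasDerivAt_sin t).const_mul r)

theorem hasDerivAt_circleVelocity (t : ℝ) :
    HasDerivAt (circleVelocity r) (-circlePath r t) t := by
  have hcos : HasDerivAt (fun t => r * cos t) (-(r * sin t)) t := by
    simpa using (hasDerivAt_cos t).const_mul r
  have hpath : -circlePath r t = !₂[-(r * cos t), -(r * sin t)] := by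
    ext i; fin_cases i <;> simp [circlePath]
  rw [hpath]
  exact ((hasDerivAt_sin t).const_mul r).neg.euclideanVec2 hcos

theorem norm_circlePath (t : ℝ) : ‖circlePath r t‖ = |r| := by
  rw [circlePath, EuclideanSpace.norm_vec2, mul_pow, mul_pow, ← mul_add, cos_sq_add_sin_sq,
    mul_one, sqrt_sq_eq_abs]

theorem norm_circleVelocity (t : ℝ) : ‖circleVelocity r t‖ = |r| := by
  rw [circleVelocity, EuclideanSpace.norm_vec2, neg_sq, mul_pow, mul_pow, ← mul_add,
    sin_sq_add_cos_sq, mul_one, sqrt_sq_eq_abs]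

theorem circlePath_ne_zero (hr : r ≠ 0) (t : ℝ) : circlePath r t ≠ 0 := by
  rw [← norm_ne_zero_iff, norm_circlePath]
  exact abs_ne_zero.2 hr

theorem hasDerivAt_smul_circleVelocity_iff (hr : r ≠ 0) {a b t : ℝ} :
    HasDerivAt (fun t => a • circleVelocity r t) (b • circlePath r t) t ↔ b = -a := by
  have hv : HasDerivAt (fun t => a • circleVelocity r t) ((-a) • circlePath r t) t := by
    rw [neg_smul, ← smul_neg]
    exact (hasDerivAt_circleVelocity t).const_smul a
  refine ⟨fun h => smul_left_injective ℝ (circlePath_ne_zero hr t) (h.unique hv), ?_⟩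
  rintro rfl
  exact hv

theorem circular_orbit_geodesic_iff_general (γ : ℝ → ℝ) (dγ r : ℝ) (hr : 0 < r)
    (hne : γ 0 ≠ γ (2 * r)) :
    (let δq : ℝ → EuclideanSpace ℝ (Fin 2) :=
        fun t => !₂[r * Real.cos t, r * Real.sin t]
     let δp : ℝ → EuclideanSpace ℝ (Fin 2) :=
        fun t => (γ 0 - γ (2 * r))⁻¹ •
          (!₂[-(r * Real.sin t), r * Real.cos t] : EuclideanSpace ℝ (Fin 2))
     (∀ t, HasDerivAt δq ((γ 0 - γ (2 * ‖δq t‖)) • δp t) t) ∧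
     (∀ t, HasDerivAt δp
        ((-2 * (dγ / (2 * ‖δq t‖)) *
          (‖(0 : EuclideanSpace ℝ (Fin 2))‖ ^ 2 - ‖δp t‖ ^ 2)) • δq t) t))
      ↔ γ 0 - γ (2 * r) + r * dγ = 0 := by
  have hc : γ 0 - γ (2 * r) ≠ 0 := sub_ne_zero.2 hne
  simp only [← circlePath.eq_1, ← circleVelocity.eq_1]
  simp only [norm_circlePath, norm_smul, norm_circleVelocity, abs_of_pos hr, norm_zero,
    smul_inv_smul₀ hc, hasDerivAt_circlePath, hasDerivAt_smul_circleVelocity_iff hr.ne',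
    forall_const, true_and]
  generalize γ 0 - γ (2 * r) = c at hc ⊢
  have hsum : -2 * (dγ / (2 * r)) * (0 ^ 2 - (‖c⁻¹‖ * r) ^ 2) + c⁻¹ = (c + r * dγ) / c ^ 2 := by
    rw [mul_pow, norm_inv, Real.norm_eq_abs, inv_pow, sq_abs]
    field_simp
    ring
  rw [← add_eq_zero_iff_eq_neg, hsum, div_eq_zero_iff, or_iff_left (pow_ne_zero 2 hc)]

/-- The circular orbit `q¹(t) = (r cos t, r sin t)`, `q² = -q¹` (so `q̄ ≡ 0`,
`δq = q¹`, `p̄ ≡ 0`, `δp = (γ₀-γ(2r))⁻¹ q̇¹`) satisfies the two-landmark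
geodesic equations iff `γ₀ - γ(2r) + r γ'(2r) = 0`. -/
theorem circular_orbit_geodesic_iff (γ : ℝ → ℝ) (dγ r : ℝ) (hr : 0 < r)
    (hγ : HasDerivAt γ dγ (2 * r)) (hne : γ 0 ≠ γ (2 * r)) :
    (let δq : ℝ → EuclideanSpace ℝ (Fin 2) :=
        fun t => !₂[r * Real.cos t, r * Real.sin t]
     let δp : ℝ → EuclideanSpace ℝ (Fin 2) :=
        fun t => (γ 0 - γ (2 * r))⁻¹ •
          (!₂[-(r * Real.sin t), r * Real.cos t] : EuclideanSpace ℝ (Fin 2))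
     (∀ t, HasDerivAt δq ((γ 0 - γ (2 * ‖δq t‖)) • δp t) t) ∧
     (∀ t, HasDerivAt δp
        ((-2 * (dγ / (2 * ‖δq t‖)) *
          (‖(0 : EuclideanSpace ℝ (Fin 2))‖ ^ 2 - ‖δp t‖ ^ 2)) • δq t) t))
      ↔ γ 0 - γ (2 * r) + r * dγ = 0 :=
  circular_orbit_geodesic_iff_general γ dγ r hr hne
end
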